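/- For q ≥ 3 and r ≥ 2, the monomial h(r,q) = y^{1+e_{[q]}} · ε_1^{r−2} (the product of all variables y_A, with y_{[q]} squared, times ε_1^{r−2}) lies in E_q^{(r)} but not in E_q^r. In particular, for q = 3, h(r,3) has degree 4r and is not expressible as ε_1^{n_1} ε_2^{n_2} ε_3^{n_3} with n_1+n_2+n_3 = r. -/

import Mathlib

/-!
A prime `P ⊇ E_q` contains, for each `i`, some variable `y_A` with `i ∈ A`. Either this variable
is `y_{[q]}`, or some `i ∉ A` yields a second variable in `P`; in both cases
`y^{1+e_{[q]}} ∈ P²`, and with `ε_1 ∈ P` this gives `h(r,q) ∈ P^r`.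

Conversely `E_q^r` lies in the monomial ideal spanned by the `∏ ε_i^{n_i}` with
`∑ n_i = r`, so `h(r,q) ∈ E_q^r` would make its exponent vector dominate that of one of them.
On the sets `[q] \ {j}` this forces `n_j ≥ 1` for all `j ≠ 1` but `∑_{j ≠ 1} n_j ≤ 1`,
impossible for `q ≥ 3`. Every product `∏ ε_i^{n_i}` with `∑ n_i = r` lies in `E_q^r`, which
gives the last claim; the degree for `q = 3` is `7 + 1 + 4 (r - 2)`.
The paper's `ε_1` is `extGen k q 0`.
-/

open MvPolynomial

/-- Index type: nonempty subsets of `[q]`. -/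
abbrev EIdx (q : ℕ) := {A : Finset (Fin q) // A.Nonempty}

/-- The generator `ε_i = ∏_{A ∋ i} y_A` of the extremal ideal. -/
noncomputable def extGen (k : Type*) [Field k] (q : ℕ) (i : Fin q) :
    MvPolynomial (EIdx q) k :=
  ∏ A : EIdx q, if i ∈ A.1 then X A else 1

/-- The `q`-extremal ideal `E_q = (ε_1, …, ε_q)`. -/
noncomputable def extIdeal (k : Type*) [Field k] (q : ℕ) :
    Ideal (MvPolynomial (EIdx q) k) :=
  Ideal.span (Set.range (extGen k q))

/-- The `r`-th symbolic power of a square-free monomial ideal: the intersection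
of the `r`-th powers of its minimal primes. -/
def symbPow {R : Type*} [CommRing R] (I : Ideal R) (r : ℕ) : Ideal R :=
  ⨅ P ∈ I.minimalPrimes, P ^ r

/-- `h(r,q) = y^{1+e_{[q]}} ε_1^{r-2}`: the product of all the variables, with
`y_{[q]}` squared, times `ε_1^{r-2}`. -/
noncomputable def hMon (k : Type*) [Field k] (q r : ℕ) (h0 : 0 < q) :
    MvPolynomial (EIdx q) k :=
  (∏ A : EIdx q, X A) *
    X (⟨Finset.univ, ⟨⟨0, h0⟩, Finset.mem_univ _⟩⟩ : EIdx q) *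
    extGen k q ⟨0, h0⟩ ^ (r - 2)

namespace MvPolynomial

variable {σ R : Type*} [CommSemiring R]

theorem monomial_equivFunOnFinite_symm [Fintype σ] (e : σ → ℕ) :
    monomial (Finsupp.equivFunOnFinite.symm e) (1 : R) = ∏ s, X s ^ e s := by
  rw [monomial_eq, C_1, one_mul, Finsupp.prod_fintype _ _ fun _ => pow_zero _]
  rfl

theorem span_monomial_pow_le {ι : Type*} [Fintype ι] (w : ι → σ →₀ ℕ) (r : ℕ) :
    Ideal.span (Set.range fun i => monomial (w i) (1 : R)) ^ r ≤
      Ideal.span ((fun d => monomial d 1) ''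
        {d | ∃ n : ι → ℕ, ∑ i, n i = r ∧ d = ∑ i, n i • w i}) := by
  induction r with
  | zero =>
    rw [pow_zero, Ideal.one_eq_top, top_le_iff, Ideal.eq_top_iff_one]
    exact Ideal.subset_span ⟨0, ⟨0, by simp, by simp⟩, rfl⟩
  | succ r ih =>
    classical
    calc _ ≤ _ * _ := Ideal.mul_mono_left ih
      _ = _ := Ideal.span_mul_span' _ _
      _ ≤ _ := Ideal.span_mono ?_
    rintro _ ⟨_, ⟨d, ⟨n, hn, rfl⟩, rfl⟩, _, ⟨i, rfl⟩, rfl⟩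
    refine ⟨∑ i, n i • w i + w i, ⟨n + Pi.single i 1, ?_, ?_⟩,
      by simp only [monomial_mul, mul_one]⟩
    · simp [Finset.sum_add_distrib, hn]
    · simp [add_smul, Finset.sum_add_distrib, Pi.single_apply]

theorem exists_sum_smul_le_of_monomial_mem_span_pow [Nontrivial R] {ι : Type*} [Fintype ι]
    {w : ι → σ →₀ ℕ} {r : ℕ} {D : σ →₀ ℕ}
    (h : monomial D (1 : R) ∈ Ideal.span (Set.range fun i => monomial (w i) (1 : R)) ^ r) :
    ∃ n : ι → ℕ, ∑ i, n i = r ∧ ∑ i, n i • w i ≤ D := by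
  classical
  obtain ⟨_, ⟨n, hn, rfl⟩, hle⟩ :=
    mem_ideal_span_monomial_image.1 (span_monomial_pow_le w r h) D (by simp)
  exact ⟨n, hn, hle⟩

end MvPolynomial

theorem Ideal.prod_mem_sq_of_ne {ι R : Type*} [CommSemiring R] {I : Ideal R} {s : Finset ι}
    {f : ι → R} {a b : ι} (ha : a ∈ s) (hb : b ∈ s) (hab : a ≠ b) (hfa : f a ∈ I)
    (hfb : f b ∈ I) : ∏ i ∈ s, f i ∈ I ^ 2 := by
  classical
  rw [← Finset.mul_prod_erase s f ha,
    ← Finset.mul_prod_erase _ f (Finset.mem_erase.2 ⟨hab.symm, hb⟩), ← mul_assoc, sq]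
  exact Ideal.mul_mem_right _ _ (Ideal.mul_mem_mul hfa hfb)

open Finset

section Extremal

variable (k : Type*) [Field k] {q : ℕ}

noncomputable def extExp (q : ℕ) (i : Fin q) : EIdx q →₀ ℕ :=
  Finsupp.equivFunOnFinite.symm fun A => if i ∈ A.1 then 1 else 0

theorem extGen_eq_monomial (i : Fin q) : extGen k q i = monomial (extExp q i) 1 := by
  rw [extExp, monomial_equivFunOnFinite_symm, extGen]
  refine prod_congr rfl fun A _ => ?_
  split_ifs <;> simp

theorem extIdeal_eq_span_monomial :
    extIdeal k q = Ideal.span (Set.range fun i => monomial (extExp q i) (1 : k)) := by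
  rw [extIdeal]
  congr 2
  exact funext (extGen_eq_monomial k)

theorem sum_smul_extExp_apply (n : Fin q → ℕ) (A : EIdx q) :
    (∑ i, n i • extExp q i) A = ∑ i ∈ A.1, n i := by
  simp [extExp, Finsupp.finsetSum_apply, Finset.sum_ite_mem]

noncomputable def hMonExp (q r : ℕ) (h0 : 0 < q) : EIdx q →₀ ℕ :=
  Finsupp.equivFunOnFinite.symm 1 + Finsupp.single ⟨univ, ⟨⟨0, h0⟩, mem_univ _⟩⟩ 1 +
    (r - 2) • extExp q ⟨0, h0⟩

theorem hMon_eq_monomial (r : ℕ) (h0 : 0 < q) :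
    hMon k q r h0 = monomial (hMonExp q r h0) 1 := by
  have hsplit : monomial (hMonExp q r h0) (1 : k) =
      monomial (Finsupp.equivFunOnFinite.symm 1) 1 * X ⟨univ, ⟨⟨0, h0⟩, mem_univ _⟩⟩ *
        monomial (extExp q ⟨0, h0⟩) 1 ^ (r - 2) := by
    simp only [hMonExp, X, monomial_pow, monomial_mul, mul_one, one_pow]
  rw [hsplit, monomial_equivFunOnFinite_symm, hMon, extGen_eq_monomial]
  simp only [Pi.one_apply, pow_one]

theorem not_sum_smul_extExp_le_hMonExp {r : ℕ} (hq : 3 ≤ q) (hr : 2 ≤ r) (n : Fin q → ℕ)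
    (hn : ∑ i, n i = r) :
    ¬ ∑ i, n i • extExp q i ≤ hMonExp q r (Nat.zero_lt_of_lt hq) := by
  intro hle
  have hcompl (j : Fin q) :
      ∑ i ∈ univ.erase j, n i ≤ 1 + if (⟨0, by omega⟩ : Fin q) = j then 0 else r - 2 := by
    have hj : (univ.erase j).Nonempty :=
      (univ_nontrivial_iff.2 (Fin.nontrivial_iff_two_le.2 (by omega))).erase_nonempty
    have hU : (⟨univ, ⟨⟨0, by omega⟩, mem_univ _⟩⟩ : EIdx q) ≠ ⟨_, hj⟩ :=
      fun h => (erase_ssubset (mem_univ j)).ne' (congrArg Subtype.val h)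
    refine (sum_smul_extExp_apply n _ ▸ hle ⟨_, hj⟩).trans_eq ?_
    simp [hMonExp, extExp, hU]
  have hpos (j : ℕ) (hj0 : j ≠ 0) (hjq : j < q) : 1 ≤ n ⟨j, hjq⟩ := by
    have h := hcompl ⟨j, hjq⟩
    rw [if_neg (by simp [Fin.ext_iff, hj0.symm])] at h
    have := add_sum_erase univ n (mem_univ ⟨j, hjq⟩)
    omega
  have hsum0 := hcompl ⟨0, by omega⟩
  rw [if_pos rfl] at hsum0
  have hpair : n ⟨1, by omega⟩ + n ⟨2, by omega⟩ ≤
      ∑ i ∈ univ.erase ⟨0, by omega⟩, n i := by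
    rw [← sum_pair (by simp [Fin.ext_iff])]
    refine sum_le_sum_of_subset fun i => ?_
    simp only [mem_insert, Fin.ext_iff, mem_singleton, mem_erase, ne_eq, mem_univ, and_true]
    omega
  have h1 := hpos 1 one_ne_zero (by omega)
  have h2 := hpos 2 two_ne_zero (by omega)
  omega

theorem hMon_notMem_extIdeal_pow {r : ℕ} (hq : 3 ≤ q) (hr : 2 ≤ r) :
    hMon k q r (Nat.zero_lt_of_lt hq) ∉ extIdeal k q ^ r := by
  rw [hMon_eq_monomial, extIdeal_eq_span_monomial]
  intro h
  obtain ⟨n, hn, hle⟩ := exists_sum_smul_le_of_monomial_mem_span_pow h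
  exact not_sum_smul_extExp_le_hMonExp hq hr n hn hle

theorem prod_extGen_pow_mem_extIdeal_pow (n : Fin q → ℕ) :
    ∏ i, extGen k q i ^ n i ∈ extIdeal k q ^ ∑ i, n i := by
  rw [← prod_pow_eq_pow_sum]
  exact Ideal.prod_mem_prod fun i _ =>
    Ideal.pow_mem_pow (Ideal.subset_span (Set.mem_range_self i)) _

theorem totalDegree_hMon_three {r : ℕ} (hr : 2 ≤ r) :
    (hMon k 3 r three_pos).totalDegree = 4 * r := by
  rw [hMon_eq_monomial, totalDegree_monomial _ one_ne_zero,
    Finsupp.sum_fintype _ _ fun _ => rfl]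
  simp only [hMonExp, extExp, Finsupp.coe_add, Finsupp.coe_smul, Pi.add_apply, Pi.smul_apply,
    Finsupp.coe_equivFunOnFinite_symm, sum_add_distrib, Finsupp.univ_sum_single_apply,
    Pi.one_apply, smul_eq_mul, ← mul_sum]
  have hcard : ∑ _A : EIdx 3, 1 = 7 := by decide
  have hcount : ∑ A : EIdx 3, (if (0 : Fin 3) ∈ A.1 then 1 else 0) = 4 := by decide
  rw [hcard, show (⟨0, _⟩ : Fin 3) = 0 from rfl, hcount]
  omega

variable {k}

theorem exists_X_mem_of_extGen_mem {P : Ideal (MvPolynomial (EIdx q) k)} [P.IsPrime] {i : Fin q}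
    (h : extGen k q i ∈ P) : ∃ A : EIdx q, i ∈ A.1 ∧ X A ∈ P := by
  obtain ⟨A, -, hA⟩ := Ideal.IsPrime.prod_mem_iff.1 h
  by_cases hiA : i ∈ A.1
  · exact ⟨A, hiA, by rwa [if_pos hiA] at hA⟩
  · rw [if_neg hiA] at hA
    exact absurd ((Ideal.eq_top_iff_one _).2 hA) Ideal.IsPrime.ne_top'

theorem prod_X_mul_X_mem_sq {P : Ideal (MvPolynomial (EIdx q) k)} [P.IsPrime]
    (hP : extIdeal k q ≤ P) {U : EIdx q} (hU : U.1 = univ) : (∏ A, X A) * X U ∈ P ^ 2 := by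
  have hX (i : Fin q) := exists_X_mem_of_extGen_mem (hP (Ideal.subset_span ⟨i, rfl⟩))
  obtain ⟨i, -⟩ := U.2
  obtain ⟨A, -, hA⟩ := hX i
  by_cases hAU : A = U
  · subst hAU
    rw [sq]
    exact Ideal.mul_mem_mul (Ideal.mem_of_dvd _ (dvd_prod_of_mem _ (mem_univ A)) hA) hA
  · obtain ⟨j, hjA⟩ : ∃ j, j ∉ A.1 := by
      by_contra! h
      exact hAU (Subtype.ext (hU ▸ eq_univ_of_forall h))
    obtain ⟨B, hjB, hB⟩ := hX j
    exact Ideal.mul_mem_right _ _ (Ideal.prod_mem_sq_of_ne (mem_univ A) (mem_univ B)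
      (by rintro rfl; exact hjA hjB) hA hB)

theorem hMon_mem_symbPow {r : ℕ} (hr : 2 ≤ r) (h0 : 0 < q) :
    hMon k q r h0 ∈ symbPow (extIdeal k q) r := by
  simp only [symbPow, Submodule.mem_iInf]
  intro P ⟨⟨_, hP⟩, _⟩
  have hpow : P ^ 2 * P ^ (r - 2) ≤ P ^ r := by rw [← pow_add, Nat.add_sub_cancel' hr]
  exact hpow (Ideal.mul_mem_mul (prod_X_mul_X_mem_sq hP rfl)
    (Ideal.pow_mem_pow (hP (Ideal.subset_span (Set.mem_range_self _))) _))

end Extremal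

theorem stmt19 (k : Type*) [Field k] (q r : ℕ) (hq : 3 ≤ q) (hr : 2 ≤ r) :
    hMon k q r (by omega) ∈ symbPow (extIdeal k q) r ∧
    hMon k q r (by omega) ∉ (extIdeal k q) ^ r ∧
    (q = 3 →
      (hMon k q r (by omega)).totalDegree = 4 * r ∧
      ¬ ∃ nn : Fin q → ℕ, (∑ i, nn i) = r ∧
        hMon k q r (by omega) = ∏ i, extGen k q i ^ nn i) := by
  refine ⟨hMon_mem_symbPow hr _, hMon_notMem_extIdeal_pow k hq hr, fun hq3 => ⟨?_, ?_⟩⟩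
  · subst hq3
    exact totalDegree_hMon_three k hr
  · rintro ⟨n, hn, hprod⟩
    exact hMon_notMem_extIdeal_pow k hq hr (hprod ▸ hn ▸ prod_extGen_pow_mem_extIdeal_pow k n)
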